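/- arXiv:2203.16068 — 5 statements merged into one kernel-verified Lean document; each statement's English description precedes it below -/
import Mathlib

section
/- (Proposition 3.1) If the ideal I = ker φ can be generated by m elements (i.e., M(F) is a complete intersection), then I equals the ideal J₁ ⊆ S generated by the m quadrics f^{(j)}_i. -/
open MvPolynomial

noncomputable section

/-- Index type for the variables of `S = ℂ[z_0, z_1, …, z_n, w^{(k)}_i]`:
`Sum.inl none` is `z_0`, `Sum.inl (some i)` is `z_{i+1}` for `i : Fin n`, and
`Sum.inr ⟨(k, i), _⟩` is `w^{(k)}_{i+1}` for `2 ≤ k ≤ r`, `0 ≤ i < s_k`. -/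
abbrev IdxR (n r : ℕ) (s : ℕ → ℕ) :=
  Option (Fin n) ⊕ {p : ℕ × ℕ // 2 ≤ p.1 ∧ p.1 ≤ r ∧ p.2 < s p.1}

/-- The polynomial ring `S = ℂ[z_0, z_1, …, z_n, w^{(k)}_i (2 ≤ k ≤ r, 1 ≤ i ≤ s_k)]`. -/
abbrev SR (n r : ℕ) (s : ℕ → ℕ) := MvPolynomial (IdxR n r s) ℂ

/-- The ℂ-algebra homomorphism `φ : S → ℂ[t, x_1, …, x_n]` sending `z_0 ↦ t^r`,
`z_i ↦ t^{r−1}·x_i` and `w^{(k)}_i ↦ t^{r−k}·Q^{(k)}_i(x_1, …, x_n)`; here the variable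
`none` plays the role of `t` and `some i` the role of `x_i`. -/
def phiR (n r : ℕ) (s : ℕ → ℕ) (Q : ℕ → ℕ → MvPolynomial (Fin n) ℂ) :
    SR n r s →ₐ[ℂ] MvPolynomial (Option (Fin n)) ℂ :=
  aeval (fun v : IdxR n r s => match v with
    | Sum.inl none => X none ^ r
    | Sum.inl (some i) => X none ^ (r - 1) * X (some i)
    | Sum.inr p => X none ^ (r - p.1.1) * rename some (Q p.1.1 p.1.2))

/-- The variable `w^{(k)}_{i+1}` of `S` (and `0` for out-of-range indices). -/
def WvarR (n r : ℕ) (s : ℕ → ℕ) (k i : ℕ) : SR n r s :=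
  if h : 2 ≤ k ∧ k ≤ r ∧ i < s k then X (Sum.inr ⟨(k, i), h⟩) else 0

/-- The quadrics `f^{(2)}_i = z_0·w^{(2)}_i − Q^{(2)}_i(z_1, …, z_n)` and, for `3 ≤ j ≤ r`,
`f^{(j)}_i = z_0·w^{(j)}_i − Σ_{l=1}^{s_{j−1}} g^{(j)}_{i,l}(z_1, …, z_n)·w^{(j−1)}_l`. -/
def fR (n r : ℕ) (s : ℕ → ℕ) (Q : ℕ → ℕ → MvPolynomial (Fin n) ℂ)
    (g : ℕ → ℕ → ℕ → MvPolynomial (Fin n) ℂ) (j i : ℕ) : SR n r s :=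
  X (Sum.inl none) * WvarR n r s j i -
    (if j = 2 then rename (fun a : Fin n => (Sum.inl (some a) : IdxR n r s)) (Q 2 i)
     else ∑ l ∈ Finset.range (s (j - 1)),
       rename (fun a : Fin n => (Sum.inl (some a) : IdxR n r s)) (g j i l)
         * WvarR n r s (j - 1) l)

/-- The ideal `J₁ ⊆ S` generated by the `m` quadrics `f^{(j)}_i`
(`2 ≤ j ≤ r`, `1 ≤ i ≤ s_j`). -/
def J1 (n r : ℕ) (s : ℕ → ℕ) (Q : ℕ → ℕ → MvPolynomial (Fin n) ℂ)
    (g : ℕ → ℕ → ℕ → MvPolynomial (Fin n) ℂ) : Ideal (SR n r s) :=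
  Ideal.span {p : SR n r s | ∃ j i, 2 ≤ j ∧ j ≤ r ∧ i < s j ∧ p = fR n r s Q g j i}

/-! `I = ker φ` is homogeneous, since `φ` multiplies degrees by `r`, and it contains no nonzero
form of degree `0` or `1`: setting `t = 1` sends the images `t^r`, `t^(r-1) x_i`,
`t^(r-k) Q^{(k)}_i` of the variables to `1`, `x_i`, `Q^{(k)}_i`, which are linearly independent
within each degree, hence altogether. So `𝔪 I`, with `𝔪` the irrelevant ideal, has no quadratic
part, and the `m` quadrics `f^{(j)}_i ∈ I`, independent because `∂/∂z_0` sends them to the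
variables `w^{(j)}_i`, stay independent in `I / 𝔪 I`. That space is spanned by the images of any
`m` generators of `I`, so the quadrics span it: `I ⊆ J₁ + 𝔪 I`, and the graded Nakayama lemma
gives `I = J₁`. -/

attribute [local instance] MvPolynomial.gradedAlgebra

namespace MvPolynomial

section CommSemiring

variable {σ R : Type*} [CommSemiring R]

theorem homogeneousComponent_mul (a b : MvPolynomial σ R) (e : ℕ) :
    homogeneousComponent e (a * b) =
      ∑ p ∈ Finset.HasAntidiagonal.antidiagonal e,
        homogeneousComponent p.1 a * homogeneousComponent p.2 b := by
  classical
  conv_lhs => rw [← sum_homogeneousComponent a, ← sum_homogeneousComponent b]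
  simp_rw [Finset.sum_mul_sum, map_sum]
  have hcomp : ∀ i j, homogeneousComponent e (homogeneousComponent i a * homogeneousComponent j b)
      = if e = i + j then homogeneousComponent i a * homogeneousComponent j b else 0 := fun i j =>
    homogeneousComponent_of_mem
      ((homogeneousComponent_isHomogeneous i a).mul (homogeneousComponent_isHomogeneous j b))
  simp_rw [hcomp, ← Finset.sum_product', ← Finset.sum_filter]
  refine Finset.sum_subset_zero_on_sdiff (fun p hp => ?_) (fun p hp => ?_) (fun _ _ => rfl)
  · exact Finset.HasAntidiagonal.mem_antidiagonal.mpr (Finset.mem_filter.mp hp).2.symm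
  · obtain ⟨hpe, hpf⟩ := Finset.mem_sdiff.mp hp
    simp only [Finset.mem_filter, Finset.mem_product, Finset.mem_range,
      (Finset.HasAntidiagonal.mem_antidiagonal.mp hpe).symm, and_true, not_and_or, not_lt] at hpf
    rcases hpf with ha | hb
    · rw [homogeneousComponent_eq_zero _ a (by omega), zero_mul]
    · rw [homogeneousComponent_eq_zero _ b (by omega), mul_zero]

theorem homogeneousComponent_mul_of_constantCoeff_eq_zero {a : MvPolynomial σ R}
    (ha : constantCoeff a = 0) (b : MvPolynomial σ R) (e : ℕ) :
    homogeneousComponent e (a * b) =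
      ∑ q ∈ Finset.range e, homogeneousComponent (e - q) a * homogeneousComponent q b := by
  rw [homogeneousComponent_mul, ← Finset.Nat.sum_antidiagonal_swap]
  simp only [Prod.fst_swap, Prod.snd_swap]
  rw [Finset.Nat.sum_antidiagonal_eq_sum_range_succ (fun q p => homogeneousComponent p a *
      homogeneousComponent q b), Finset.sum_range_succ, Nat.sub_self, homogeneousComponent_zero,
    ← constantCoeff_eq, ha, map_zero, zero_mul, add_zero]

theorem homogeneousComponent_eq_zero_of_mem_mul {I : Ideal (MvPolynomial σ R)} {d : ℕ}
    (hI : ∀ b ∈ I, ∀ e < d, homogeneousComponent e b = 0) {u : MvPolynomial σ R}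
    (hu : u ∈ RingHom.ker (constantCoeff : MvPolynomial σ R →+* R) * I) {e : ℕ} (he : e ≤ d) :
    homogeneousComponent e u = 0 := by
  refine Submodule.mul_induction_on hu (fun a ha b hb => ?_) fun x y hx hy => ?_
  · rw [homogeneousComponent_mul_of_constantCoeff_eq_zero ha]
    exact Finset.sum_eq_zero fun q hq => by
      rw [hI b hb q (by simp at hq; omega), mul_zero]
  · rw [map_add, hx, hy, add_zero]

/-- Graded Nakayama lemma. -/
theorem le_of_le_sup_mul {I J : Ideal (MvPolynomial σ R)}
    (hJ : J.IsHomogeneous (homogeneousSubmodule σ R))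
    (h : I ≤ J ⊔ RingHom.ker (constantCoeff : MvPolynomial σ R →+* R) * I) : I ≤ J := by
  suffices ∀ e, ∀ y ∈ I, homogeneousComponent e y ∈ J from fun y hy =>
    sum_homogeneousComponent y ▸ J.sum_mem fun e _ => this e y hy
  intro e
  induction e using Nat.strong_induction_on with
  | _ e ih =>
    intro y hy
    obtain ⟨w, hw, u, hu, rfl⟩ := Submodule.mem_sup.mp (h hy)
    rw [map_add]
    refine J.add_mem (homogeneousComponent_mem_of_mem hJ hw e) ?_
    refine Submodule.mul_induction_on hu (fun a ha b hb => ?_) fun x y hx hy => ?_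
    · rw [homogeneousComponent_mul_of_constantCoeff_eq_zero ha]
      exact J.sum_mem fun q hq => J.mul_mem_left _ (ih q (Finset.mem_range.mp hq) b hb)
    · rw [map_add]; exact J.add_mem hx hy

theorem IsHomogeneous.aeval_const_mul {τ : Type*} {P : MvPolynomial σ R} {d : ℕ}
    (hP : P.IsHomogeneous d) (c : MvPolynomial τ R) (F : σ → MvPolynomial τ R) :
    MvPolynomial.aeval (fun i => c * F i) P = c ^ d * MvPolynomial.aeval F P := by
  conv_lhs => rw [P.as_sum]
  conv_rhs => rw [P.as_sum]
  simp_rw [map_sum, Finset.mul_sum, aeval_monomial, Finsupp.prod, mul_pow,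
    Finset.prod_mul_distrib, Finset.prod_pow_eq_pow_sum]
  refine Finset.sum_congr rfl fun u hu => ?_
  have hdeg : ∑ i ∈ u.support, u i = d := by
    rw [← hP (mem_support_iff.mp hu)]; simp [Finsupp.weight_apply, Finsupp.sum]
  rw [hdeg]
  ring

end CommSemiring

section CommRing

variable {σ R : Type*} [CommRing R]

theorem restrictScalars_span_le_span_sup_mul (S : Set (MvPolynomial σ R)) :
    (Ideal.span S).restrictScalars R ≤ Submodule.span R S ⊔
      (RingHom.ker (constantCoeff : MvPolynomial σ R →+* R) * Ideal.span S).restrictScalars R := by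
  intro x hx
  induction hx using Submodule.span_induction with
  | mem x hx => exact Submodule.mem_sup_left (Submodule.subset_span hx)
  | zero => exact zero_mem _
  | add x y _ _ hx hy => exact add_mem hx hy
  | smul a x hx ih =>
    have hsplit : a • x = constantCoeff a • x + (a - C (constantCoeff a)) * x := by
      rw [smul_eq_mul, smul_eq_C_mul]; ring
    rw [hsplit]
    refine add_mem (Submodule.smul_mem _ _ ih) (Submodule.mem_sup_right ?_)
    exact Ideal.mul_mem_mul (by simp) hx

theorem linearIndependent_of_isHomogeneous {ι : Type*} {P : ι → MvPolynomial σ R} {deg : ι → ℕ}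
    (hP : ∀ i, (P i).IsHomogeneous (deg i)) (h : ∀ k, LinearIndepOn R P {i | deg i = k}) :
    LinearIndependent R P := by
  classical
  rw [linearIndependent_iff']
  intro t c hsum i hi
  have hk : ∑ j ∈ t.subtype (deg i = deg ·), c j • P j = 0 := by
    have := congrArg (homogeneousComponent (deg i)) hsum
    simp_rw [map_sum, map_smul, homogeneousComponent_of_mem (hP _), smul_ite, smul_zero,
      map_zero] at this
    rwa [Finset.sum_subtype_eq_sum_filter (f := fun j => c j • P j), Finset.sum_filter]
  have hfiber : LinearIndepOn R P {j | deg i = deg j} := by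
    simpa only [eq_comm] using h (deg i)
  exact linearIndependent_iff'.mp hfiber _ (fun j => c j) hk ⟨i, rfl⟩
    (Finset.mem_subtype.mpr hi)

end CommRing

end MvPolynomial

namespace Submodule

variable {K V : Type*} [Field K] [AddCommGroup V] [Module K V]

theorem le_span_sup_of_linearIndependent_mkQ {κ ι : Type*} [Fintype κ] [Fintype ι]
    {U I : Submodule K V} (v : κ → V) (hI : I ≤ span K (Set.range v) ⊔ U) (F : ι → V)
    (hFI : ∀ i, F i ∈ I) (hF : LinearIndependent K (U.mkQ ∘ F))
    (hcard : Fintype.card κ ≤ Fintype.card ι) : I ≤ span K (Set.range F) ⊔ U := by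
  have hIv : I.map U.mkQ ≤ (span K (Set.range v)).map U.mkQ := by
    simpa [map_sup] using map_mono (f := U.mkQ) hI
  have : FiniteDimensional K (span K (Set.range v)) :=
    FiniteDimensional.span_of_finite K (Set.finite_range v)
  have : FiniteDimensional K (I.map U.mkQ) := finiteDimensional_of_le hIv
  have hFI' : (span K (Set.range F)).map U.mkQ ≤ I.map U.mkQ :=
    map_mono (span_le.mpr (Set.range_subset_iff.mpr hFI))
  have heq : (span K (Set.range F)).map U.mkQ = I.map U.mkQ := by
    refine eq_of_le_of_finrank_le hFI' ?_
    calc Module.finrank K (I.map U.mkQ)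
        ≤ Module.finrank K ((span K (Set.range v)).map U.mkQ) := finrank_mono hIv
      _ ≤ Fintype.card κ := by
          rw [map_span, ← Set.range_comp]; exact finrank_range_le_card _
      _ ≤ Fintype.card ι := hcard
      _ = Module.finrank K ((span K (Set.range F)).map U.mkQ) := by
          rw [map_span, ← Set.range_comp, finrank_span_eq_card hF]
  rw [sup_comm, ← comap_map_mkQ, heq]
  exact le_comap_map _ _

end Submodule

namespace EulerSymmetric

abbrev WIdx (r : ℕ) (s : ℕ → ℕ) : Type :=
  {p : ℕ × ℕ // 2 ≤ p.1 ∧ p.1 ≤ r ∧ p.2 < s p.1}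

def wIdxEquivSigma (r : ℕ) (s : ℕ → ℕ) : WIdx r s ≃ Σ k : Finset.Icc 2 r, Fin (s k) where
  toFun q := ⟨⟨q.1.1, Finset.mem_Icc.mpr ⟨q.2.1, q.2.2.1⟩⟩, ⟨q.1.2, q.2.2.2⟩⟩
  invFun p := ⟨(p.1.1, p.2.1), (Finset.mem_Icc.mp p.1.2).1, (Finset.mem_Icc.mp p.1.2).2, p.2.2⟩
  left_inv _ := rfl
  right_inv _ := rfl

instance (r : ℕ) (s : ℕ → ℕ) : Fintype (WIdx r s) :=
  Fintype.ofEquiv _ (wIdxEquivSigma r s).symm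

theorem card_wIdx (r : ℕ) (s : ℕ → ℕ) :
    Fintype.card (WIdx r s) = ∑ k ∈ Finset.Icc 2 r, s k := by
  rw [Fintype.card_congr (wIdxEquivSigma r s), Fintype.card_sigma,
    ← Finset.sum_attach (Finset.Icc 2 r) s]
  simp

def dehomogenize {σ R : Type*} [CommSemiring R] :
    MvPolynomial (Option σ) R →ₐ[R] MvPolynomial σ R :=
  aeval fun o => o.elim 1 X

variable {n r : ℕ} {s : ℕ → ℕ}

def xDeg : IdxR n r s → ℕ
  | Sum.inl none => 0
  | Sum.inl (some _) => 1
  | Sum.inr q => q.1.1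

def xPart (Q : ℕ → ℕ → MvPolynomial (Fin n) ℂ) : IdxR n r s → MvPolynomial (Fin n) ℂ
  | Sum.inl none => 1
  | Sum.inl (some i) => X i
  | Sum.inr q => Q q.1.1 q.1.2

def quadric (Q : ℕ → ℕ → MvPolynomial (Fin n) ℂ) (g : ℕ → ℕ → ℕ → MvPolynomial (Fin n) ℂ)
    (q : WIdx r s) : SR n r s :=
  fR n r s Q g q.1.1 q.1.2

theorem xDeg_le (hr : 1 ≤ r) (v : IdxR n r s) : xDeg v ≤ r := by
  rcases v with (_ | i) | q
  exacts [Nat.zero_le r, hr, q.2.2.1]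

theorem WvarR_eq_X {k i : ℕ} (h : 2 ≤ k ∧ k ≤ r ∧ i < s k) :
    WvarR n r s k i = X (Sum.inr ⟨(k, i), h⟩) :=
  dif_pos h

variable {Q : ℕ → ℕ → MvPolynomial (Fin n) ℂ} {g : ℕ → ℕ → ℕ → MvPolynomial (Fin n) ℂ}
  (hr : 1 ≤ r)
  (hhom : ∀ k, 2 ≤ k → k ≤ r → ∀ i < s k, (Q k i).IsHomogeneous k)
  (hli : ∀ k, 2 ≤ k → k ≤ r → LinearIndependent ℂ (fun i : Fin (s k) => Q k (i : ℕ)))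
  (hg1 : ∀ j, 3 ≤ j → j ≤ r → ∀ i < s j, ∀ l < s (j - 1), (g j i l).IsHomogeneous 1)
  (hEuler : ∀ j, 3 ≤ j → j ≤ r → ∀ i < s j,
    Q j i = ∑ l ∈ Finset.range (s (j - 1)), g j i l * Q (j - 1) l)

theorem phiR_X (v : IdxR n r s) :
    phiR n r s Q (X v) = X none ^ (r - xDeg v) * rename some (xPart Q v) := by
  rcases v with (_ | i) | q <;> simp [phiR, xDeg, xPart]

theorem phiR_WvarR {k i : ℕ} (h : 2 ≤ k ∧ k ≤ r ∧ i < s k) :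
    phiR n r s Q (WvarR n r s k i) = X none ^ (r - k) * rename some (Q k i) := by
  rw [WvarR_eq_X h, phiR_X]
  rfl

theorem phiR_rename_of_isHomogeneous {P : MvPolynomial (Fin n) ℂ} {d : ℕ}
    (hP : P.IsHomogeneous d) :
    phiR n r s Q (rename (fun a => Sum.inl (some a)) P) =
      X none ^ ((r - 1) * d) * rename some P := by
  rw [phiR, aeval_rename, pow_mul, ← aeval_X_left_apply (rename some P), aeval_rename]
  exact hP.aeval_const_mul (X none ^ (r - 1)) fun a => X (some a)

theorem dehomogenize_comp_phiR : dehomogenize.comp (phiR n r s Q) = aeval (xPart Q) := by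
  refine algHom_ext fun v => ?_
  rw [AlgHom.comp_apply, phiR_X, dehomogenize, aeval_X, map_mul, map_pow, aeval_X, aeval_rename]
  simp [Function.comp_def]

include hhom in
theorem isHomogeneous_xPart (v : IdxR n r s) : (xPart Q v).IsHomogeneous (xDeg v) := by
  rcases v with (_ | i) | ⟨⟨k, i⟩, hk2, hkr, hi⟩
  · exact isHomogeneous_one _ _
  · exact isHomogeneous_X _ _
  · exact hhom k hk2 hkr i hi

include hr hhom in
theorem isHomogeneous_phiR {p : SR n r s} {d : ℕ} (hp : p.IsHomogeneous d) :
    (phiR n r s Q p).IsHomogeneous (r * d) := by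
  rw [aeval_unique (phiR n r s Q)]
  refine hp.aeval _ fun v => ?_
  have h := (isHomogeneous_X_pow (R := ℂ) (none : Option (Fin n)) (r - xDeg v)).mul
    ((isHomogeneous_xPart hhom v).rename_isHomogeneous (f := some))
  rwa [Nat.sub_add_cancel (xDeg_le hr v), ← phiR_X] at h

include hr hhom in
theorem phiR_homogeneousComponent (x : SR n r s) (e : ℕ) :
    phiR n r s Q (homogeneousComponent e x) = homogeneousComponent (r * e) (phiR n r s Q x) := by
  conv_rhs => rw [← sum_homogeneousComponent x, map_sum, map_sum]
  have hcomp : ∀ i, homogeneousComponent (r * e) (phiR n r s Q (homogeneousComponent i x))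
      = if e = i then phiR n r s Q (homogeneousComponent i x) else 0 := fun i => by
    rw [homogeneousComponent_of_mem
      (isHomogeneous_phiR hr hhom (homogeneousComponent_isHomogeneous i x))]
    exact if_congr (Nat.mul_left_cancel_iff (by omega)) rfl rfl
  rw [Finset.sum_congr rfl fun i _ => hcomp i, Finset.sum_ite_eq]
  split_ifs with he
  · rfl
  · rw [homogeneousComponent_eq_zero _ x (by simpa using he), map_zero]

include hr hhom in
theorem homogeneousComponent_mem_ker {x : SR n r s} (hx : x ∈ RingHom.ker (phiR n r s Q))
    (e : ℕ) : homogeneousComponent e x ∈ RingHom.ker (phiR n r s Q) := by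
  rw [RingHom.mem_ker, phiR_homogeneousComponent hr hhom, RingHom.mem_ker.mp hx, map_zero]

include hli in
theorem linearIndepOn_xPart_fiber (k : ℕ) :
    LinearIndepOn ℂ (xPart Q) {v : IdxR n r s | xDeg v = k} := by
  match k with
  | 0 =>
    refine (LinearIndepOn.singleton (R := ℂ) (v := xPart Q) (i := Sum.inl none)
      one_ne_zero).mono ?_
    rintro ((_ | i) | ⟨⟨k, i⟩, hk⟩) hv <;> simp_all [xDeg]
    omega
  | 1 =>
    have hX : LinearIndepOn ℂ (xPart Q)
        (Set.range fun i : Fin n => (Sum.inl (some i) : IdxR n r s)) :=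
      (linearIndepOn_range_iff (Sum.inl_injective.comp (Option.some_injective _)) _).mpr
        (linearIndependent_X (Fin n) ℂ)
    refine hX.mono ?_
    rintro ((_ | i) | ⟨⟨k, i⟩, hk⟩) hv <;> simp_all [xDeg]
    omega
  | k + 2 =>
    by_cases hkr : k + 2 ≤ r
    · let w : Fin (s (k + 2)) → IdxR n r s := fun i => Sum.inr ⟨(k + 2, i), by omega, hkr, i.2⟩
      have hw : Function.Injective w := fun i j h => Fin.ext (by simpa [w] using h)
      have hQ : LinearIndepOn ℂ (xPart Q) (Set.range w) :=
        (linearIndepOn_range_iff hw _).mpr (hli (k + 2) (by omega) hkr)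
      refine hQ.mono ?_
      rintro ((_ | i) | ⟨⟨k', i⟩, hk⟩) hv <;> simp only [xDeg, Set.mem_ofPred_eq] at hv <;>
        try omega
      subst hv
      exact ⟨⟨i, hk.2.2⟩, rfl⟩
    · refine (linearIndepOn_empty ℂ (xPart Q)).mono ?_
      rintro ((_ | i) | ⟨⟨k', i⟩, hk⟩) hv <;> simp_all [xDeg]
      omega

include hhom hli in
theorem eq_zero_of_mem_ker_of_isHomogeneous_one {x : SR n r s}
    (hx : x ∈ RingHom.ker (phiR n r s Q)) (hx1 : x.IsHomogeneous 1) : x = 0 := by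
  have hspan : x ∈ Submodule.span ℂ (Set.range (X : IdxR n r s → SR n r s)) := by
    rw [← homogeneousSubmodule_one_eq_span_X]; exact hx1
  obtain ⟨c, rfl⟩ := (Submodule.mem_span_range_iff_exists_fun ℂ).mp hspan
  have hrel : ∑ v, c v • xPart Q v = 0 := by
    have h := AlgHom.congr_fun (dehomogenize_comp_phiR (Q := Q)) (∑ v, c v • X v)
    rw [AlgHom.comp_apply, RingHom.mem_ker.mp hx, map_zero] at h
    simpa using h.symm
  have hind : LinearIndependent ℂ (xPart Q : IdxR n r s → _) :=
    linearIndependent_of_isHomogeneous (isHomogeneous_xPart hhom) (linearIndepOn_xPart_fiber hli)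
  simp [Fintype.linearIndependent_iff.mp hind c hrel]

include hr hhom hli in
theorem homogeneousComponent_eq_zero_of_mem_ker {x : SR n r s}
    (hx : x ∈ RingHom.ker (phiR n r s Q)) {e : ℕ} (he : e < 2) :
    homogeneousComponent e x = 0 := by
  have hxe := homogeneousComponent_mem_ker hr hhom hx e
  interval_cases e
  · rw [homogeneousComponent_zero] at hxe ⊢
    simpa [phiR] using hxe
  · exact eq_zero_of_mem_ker_of_isHomogeneous_one hhom hli hxe
      (homogeneousComponent_isHomogeneous 1 x)

include hhom hg1 hEuler in
theorem phiR_fR {j i : ℕ} (hj : 2 ≤ j) (hjr : j ≤ r) (hi : i < s j) :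
    phiR n r s Q (fR n r s Q g j i) = 0 := by
  have hz0 : phiR n r s Q (X (Sum.inl none)) = X none ^ r := by simp [phiR]
  rw [fR, map_sub, map_mul, hz0, phiR_WvarR ⟨hj, hjr, hi⟩, sub_eq_zero, ← mul_assoc, ← pow_add]
  split_ifs with hj2
  · subst hj2
    rw [phiR_rename_of_isHomogeneous (hhom 2 le_rfl hjr i hi)]
    congr 2
    omega
  have hterm : ∀ l ∈ Finset.range (s (j - 1)),
      phiR n r s Q (rename (fun a => Sum.inl (some a)) (g j i l) * WvarR n r s (j - 1) l) =
        X none ^ (r + (r - j)) * rename some (g j i l * Q (j - 1) l) := fun l hl => by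
    have hl := Finset.mem_range.mp hl
    rw [map_mul, phiR_rename_of_isHomogeneous (hg1 j (by omega) hjr i hi l hl),
      phiR_WvarR ⟨by omega, by omega, hl⟩, mul_mul_mul_comm, ← pow_add, map_mul,
      show (r - 1) * 1 + (r - (j - 1)) = r + (r - j) by omega]
  rw [map_sum, Finset.sum_congr rfl hterm, ← Finset.mul_sum, ← map_sum,
    ← hEuler j (by omega) hjr i hi]

include hhom hg1 in
theorem isHomogeneous_fR {j i : ℕ} (hj : 2 ≤ j) (hjr : j ≤ r) (hi : i < s j) :
    (fR n r s Q g j i).IsHomogeneous 2 := by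
  rw [fR, WvarR_eq_X ⟨hj, hjr, hi⟩]
  refine ((isHomogeneous_X ℂ _).mul (isHomogeneous_X ℂ _)).sub ?_
  split_ifs with hj2
  · subst hj2
    exact (hhom 2 le_rfl hjr i hi).rename_isHomogeneous
  refine IsHomogeneous.sum _ _ _ fun l hl => ?_
  have hl := Finset.mem_range.mp hl
  rw [WvarR_eq_X ⟨by omega, by omega, hl⟩]
  exact (hg1 j (by omega) hjr i hi l hl).rename_isHomogeneous.mul (isHomogeneous_X ℂ _)

theorem pderiv_fR (j i : ℕ) :
    pderiv (Sum.inl none) (fR n r s Q g j i) = WvarR n r s j i := by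
  have hW : ∀ k l, pderiv (Sum.inl none) (WvarR n r s k l) = 0 := fun k l => by
    unfold WvarR; split_ifs <;> simp [pderiv_X]
  have hren : ∀ P : MvPolynomial (Fin n) ℂ,
      pderiv (Sum.inl none) (rename (fun a => (Sum.inl (some a) : IdxR n r s)) P) = 0 :=
    fun P => pderiv_eq_zero_of_notMem_vars fun h => by
      obtain ⟨a, -, ha⟩ := Finset.mem_image.mp (vars_rename _ P h)
      simp at ha
  rw [fR, map_sub, Derivation.leibniz, hW, pderiv_X_self]
  split_ifs
  · simp [hren]
  · simp [Derivation.leibniz, hW, hren]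

theorem linearIndependent_quadric : LinearIndependent ℂ (quadric Q g : WIdx r s → SR n r s) := by
  have hcomp : (pderiv (R := ℂ) (Sum.inl none : IdxR n r s)).toLinearMap ∘ quadric Q g =
      X ∘ Sum.inr :=
    funext fun q => (pderiv_fR q.1.1 q.1.2).trans (WvarR_eq_X q.2)
  refine LinearIndependent.of_comp (pderiv (R := ℂ) (Sum.inl none : IdxR n r s)).toLinearMap ?_
  rw [hcomp]
  exact (linearIndependent_X (IdxR n r s) ℂ).comp _ Sum.inr_injective

include hhom hg1 hEuler in
theorem J1_le_ker : J1 n r s Q g ≤ RingHom.ker (phiR n r s Q) := by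
  rw [J1, Ideal.span_le]
  rintro _ ⟨j, i, hj, hjr, hi, rfl⟩
  exact phiR_fR hhom hg1 hEuler hj hjr hi

include hhom hg1 in
theorem isHomogeneous_J1 :
    (J1 n r s Q g).IsHomogeneous (homogeneousSubmodule (IdxR n r s) ℂ) := by
  refine Ideal.homogeneous_span _ _ ?_
  rintro _ ⟨j, i, hj, hjr, hi, rfl⟩
  exact ⟨2, isHomogeneous_fR hhom hg1 hj hjr hi⟩

include hr hhom hli hg1 in
theorem disjoint_span_quadric_mul_ker :
    Disjoint (Submodule.span ℂ (Set.range (quadric Q g)))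
      ((RingHom.ker (constantCoeff : SR n r s →+* ℂ) * RingHom.ker (phiR n r s Q)).restrictScalars
        ℂ) := by
  refine Submodule.disjoint_def.mpr fun x hxF hxU => ?_
  have hx2 : x.IsHomogeneous 2 := by
    refine (Submodule.span_le (p := (homogeneousSubmodule _ ℂ 2).restrictScalars ℂ)).mpr ?_ hxF
    rintro _ ⟨q, rfl⟩
    exact isHomogeneous_fR hhom hg1 q.2.1 q.2.2.1 q.2.2.2
  rw [← homogeneousComponent_eq_self hx2]
  exact homogeneousComponent_eq_zero_of_mem_mul
    (fun b hb e he => homogeneousComponent_eq_zero_of_mem_ker hr hhom hli hb he) hxU le_rfl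

include hr hhom hli hg1 hEuler in
theorem ker_le_J1_sup_mul
    (hci : ∃ gens : Fin (∑ k ∈ Finset.Icc 2 r, s k) → SR n r s,
        RingHom.ker (phiR n r s Q) = Ideal.span (Set.range gens)) :
    RingHom.ker (phiR n r s Q) ≤
      J1 n r s Q g ⊔ RingHom.ker (constantCoeff : SR n r s →+* ℂ) * RingHom.ker (phiR n r s Q) := by
  obtain ⟨gens, hgens⟩ := hci
  have hgen := restrictScalars_span_le_span_sup_mul (Set.range gens)
  rw [← hgens] at hgen
  have hspan := Submodule.le_span_sup_of_linearIndependent_mkQ gens hgen (quadric Q g)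
    (fun q => phiR_fR hhom hg1 hEuler q.2.1 q.2.2.1 q.2.2.2)
    (linearIndependent_quadric.map <| by
      rw [Submodule.ker_mkQ]; exact disjoint_span_quadric_mul_ker hr hhom hli hg1)
    (by rw [card_wIdx, Fintype.card_fin])
  intro x hx
  obtain ⟨y, hy, z, hz, rfl⟩ := Submodule.mem_sup.mp (hspan hx)
  refine Submodule.add_mem_sup ?_ hz
  refine (Submodule.span_le (p := (J1 n r s Q g).restrictScalars ℂ)).mpr ?_ hy
  rintro _ ⟨q, rfl⟩
  exact Ideal.subset_span ⟨q.1.1, q.1.2, q.2.1, q.2.2.1, q.2.2.2, rfl⟩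

end EulerSymmetric

theorem euler_symmetric_complete_intersection_is_quadratic_general
    (n r : ℕ) (hr : 2 ≤ r)
    (s : ℕ → ℕ)
    (Q : ℕ → ℕ → MvPolynomial (Fin n) ℂ)
    (hhom : ∀ k, 2 ≤ k → k ≤ r → ∀ i < s k, (Q k i).IsHomogeneous k)
    (hli : ∀ k, 2 ≤ k → k ≤ r → LinearIndependent ℂ (fun i : Fin (s k) => Q k (i : ℕ)))
    (g : ℕ → ℕ → ℕ → MvPolynomial (Fin n) ℂ)
    (hg1 : ∀ j, 3 ≤ j → j ≤ r → ∀ i < s j, ∀ l < s (j - 1), (g j i l).IsHomogeneous 1)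
    (hEuler : ∀ j, 3 ≤ j → j ≤ r → ∀ i < s j,
      Q j i = ∑ l ∈ Finset.range (s (j - 1)), g j i l * Q (j - 1) l)
    (hci : ∃ gens : Fin (∑ k ∈ Finset.Icc 2 r, s k) → SR n r s,
        RingHom.ker (phiR n r s Q) = Ideal.span (Set.range gens)) :
    RingHom.ker (phiR n r s Q) = J1 n r s Q g :=
  le_antisymm
    (le_of_le_sup_mul (EulerSymmetric.isHomogeneous_J1 hhom hg1)
      (EulerSymmetric.ker_le_J1_sup_mul (by omega) hhom hli hg1 hEuler hci))
    (EulerSymmetric.J1_le_ker hhom hg1 hEuler)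

/-- (Proposition 3.1) If the ideal `I = ker φ` can be generated by
`m = s_2 + ⋯ + s_r` elements (i.e. `M(F)` is a complete intersection),
then `I` equals the ideal `J₁` generated by the `m` quadrics `f^{(j)}_i`. -/
theorem euler_symmetric_complete_intersection_is_quadratic
    (n r : ℕ) (hn : 1 ≤ n) (hr : 2 ≤ r)
    (s : ℕ → ℕ) (hsr : 1 ≤ s r)
    (Q : ℕ → ℕ → MvPolynomial (Fin n) ℂ)
    (hhom : ∀ k, 2 ≤ k → k ≤ r → ∀ i < s k, (Q k i).IsHomogeneous k)
    (hli : ∀ k, 2 ≤ k → k ≤ r → LinearIndependent ℂ (fun i : Fin (s k) => Q k (i : ℕ)))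
    (hprol : ∀ k, 2 ≤ k → k < r → ∀ i < s (k + 1), ∀ l : Fin n,
      pderiv l (Q (k + 1) i) ∈ Submodule.span ℂ {q | ∃ j < s k, q = Q k j})
    (g : ℕ → ℕ → ℕ → MvPolynomial (Fin n) ℂ)
    (hg1 : ∀ j, 3 ≤ j → j ≤ r → ∀ i < s j, ∀ l < s (j - 1), (g j i l).IsHomogeneous 1)
    (hEuler : ∀ j, 3 ≤ j → j ≤ r → ∀ i < s j,
      Q j i = ∑ l ∈ Finset.range (s (j - 1)), g j i l * Q (j - 1) l)
    (hci : ∃ gens : Fin (∑ k ∈ Finset.Icc 2 r, s k) → SR n r s,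
        RingHom.ker (phiR n r s Q) = Ideal.span (Set.range gens)) :
    RingHom.ker (phiR n r s Q) = J1 n r s Q g :=
  euler_symmetric_complete_intersection_is_quadratic_general n r hr s Q hhom hli g hg1 hEuler hci
end
end

section
/- (Lemma 3.2) Assume r ≥ 3 and s_r = 1. Let G be a nonzero homogeneous polynomial in the variables z_1, …, z_n, w^{(r−1)}_1, …, w^{(r−1)}_{s_{r−1}}, w^{(r)}_1 which can be written G = G_0 + w^{(r)}_1·G_1, where G_0 is a nonzero polynomial in the variables w^{(r−1)}_1, …, w^{(r−1)}_{s_{r−1}} only. If G ∈ I = ker φ, then G does not lie in the radical of the ideal J₁. -/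
open MvPolynomial

noncomputable section

/-!
Every quadric `f^{(j)}_i` vanishes on the linear space `z_0 = ⋯ = z_n = 0`: each of its terms
contains `z_0` or a form of positive degree in `z_1, …, z_n`.  Take the point of that space
with `w^{(r−1)} = c` and all other `w` zero, where `c` is chosen with `G₀(c) ≠ 0`.  It lies in
the zero set of `J₁`, yet `G` takes the value `G₀(c) ≠ 0` there, so no power of `G` lies in `J₁`.
-/

theorem Ideal.notMem_radical_of_le_ker {R S : Type*} [CommSemiring R] [Semiring S] [IsReduced S]
    (f : R →+* S) {J : Ideal R} (hJ : J ≤ RingHom.ker f) {x : R} (hx : f x ≠ 0) :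
    x ∉ J.radical := by
  rintro ⟨N, hN⟩
  exact hx (IsReduced.eq_zero _ ⟨N, by simpa only [RingHom.mem_ker, map_pow] using hJ hN⟩)

namespace MvPolynomial

variable {σ R : Type*}

theorem eval_indicator_of_mem_supported [CommSemiring R] {s : Set σ} {p : MvPolynomial σ R}
    (hp : p ∈ supported R s) (c : σ → R) : eval (s.indicator c) p = eval c p :=
  hom_congr_vars (by ext; simp)
    (fun i hi _ => by simp [Set.indicator_of_mem (mem_supported.mp hp hi)]) rfl

theorem exists_eval_indicator_ne_zero [CommRing R] [IsDomain R] [Infinite R] {s : Set σ}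
    {p : MvPolynomial σ R} (hp : p ∈ supported R s) (hp0 : p ≠ 0) :
    ∃ c : σ → R, eval (s.indicator c) p ≠ 0 := by
  by_contra! h
  exact hp0 (funext fun c => by rw [← eval_indicator_of_mem_supported hp, h, map_zero])

theorem IsHomogeneous.eval_zero [CommSemiring R] {p : MvPolynomial σ R} {d : ℕ}
    (hp : p.IsHomogeneous d) (hd : d ≠ 0) : eval 0 p = 0 := by
  rw [MvPolynomial.eval_zero]
  exact hp.coeff_eq_zero (by simpa using hd.symm)

end MvPolynomial

section

variable {n r : ℕ} {s : ℕ → ℕ}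

/-- The variables `w^{(k)}_1, …, w^{(k)}_{s_k}` of `S`. -/
def wLayer (n r : ℕ) (s : ℕ → ℕ) (k : ℕ) : Set (IdxR n r s) :=
  {u | ∃ p, u = Sum.inr p ∧ p.1.1 = k}

theorem eval_indicator_wLayer_WvarR_top (c : IdxR n r s → ℂ) (i : ℕ) :
    eval ((wLayer n r s (r - 1)).indicator c) (WvarR n r s r i) = 0 := by
  unfold WvarR
  split_ifs with h
  · rw [eval_X]
    refine Set.indicator_of_notMem ?_ c
    rintro ⟨p, hp, hpr⟩
    cases hp
    simp only at hpr
    omega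
  · exact map_zero _

variable {a : IdxR n r s → ℂ}

theorem eval_rename_z_eq_zero (ha : ∀ u, a (Sum.inl u) = 0) {p : MvPolynomial (Fin n) ℂ}
    {d : ℕ} (hp : p.IsHomogeneous d) (hd : d ≠ 0) :
    eval a (rename (fun i => (Sum.inl (some i) : IdxR n r s)) p) = 0 := by
  rw [eval_rename]
  convert hp.eval_zero hd
  funext i
  exact ha _

variable {Q : ℕ → ℕ → MvPolynomial (Fin n) ℂ} {g : ℕ → ℕ → ℕ → MvPolynomial (Fin n) ℂ}

theorem eval_fR_eq_zero
    (hhom : ∀ k, 2 ≤ k → k ≤ r → ∀ i < s k, (Q k i).IsHomogeneous k)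
    (hg1 : ∀ j, 3 ≤ j → j ≤ r → ∀ i < s j, ∀ l < s (j - 1), (g j i l).IsHomogeneous 1)
    (ha : ∀ u, a (Sum.inl u) = 0) {j i : ℕ} (hj : 2 ≤ j) (hjr : j ≤ r) (hi : i < s j) :
    eval a (fR n r s Q g j i) = 0 := by
  have hz0 : eval a (X (Sum.inl none) : SR n r s) = 0 := by rw [eval_X, ha]
  rw [fR, map_sub, map_mul, hz0, zero_mul, zero_sub, neg_eq_zero]
  split_ifs with h2
  · subst h2
    exact eval_rename_z_eq_zero ha (hhom 2 le_rfl hjr i hi) two_ne_zero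
  · rw [map_sum]
    refine Finset.sum_eq_zero fun l hl => ?_
    rw [map_mul, eval_rename_z_eq_zero ha (hg1 j (by omega) hjr i hi l (Finset.mem_range.mp hl))
      one_ne_zero, zero_mul]

theorem J1_le_ker_eval
    (hhom : ∀ k, 2 ≤ k → k ≤ r → ∀ i < s k, (Q k i).IsHomogeneous k)
    (hg1 : ∀ j, 3 ≤ j → j ≤ r → ∀ i < s j, ∀ l < s (j - 1), (g j i l).IsHomogeneous 1)
    (ha : ∀ u, a (Sum.inl u) = 0) :
    J1 n r s Q g ≤ RingHom.ker (eval a) := by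
  rw [J1, Ideal.span_le]
  rintro _ ⟨j, i, hj, hjr, hi, rfl⟩
  exact eval_fR_eq_zero hhom hg1 ha hj hjr hi

end

theorem not_mem_radical_J1_of_mem_ker_general
    (n r : ℕ)
    (s : ℕ → ℕ)
    (Q : ℕ → ℕ → MvPolynomial (Fin n) ℂ)
    (hhom : ∀ k, 2 ≤ k → k ≤ r → ∀ i < s k, (Q k i).IsHomogeneous k)
    (g : ℕ → ℕ → ℕ → MvPolynomial (Fin n) ℂ)
    (hg1 : ∀ j, 3 ≤ j → j ≤ r → ∀ i < s j, ∀ l < s (j - 1), (g j i l).IsHomogeneous 1)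
    (G G₀ G₁ : SR n r s)
    (hdec : G = G₀ + WvarR n r s r 0 * G₁)
    (hG₀ne : G₀ ≠ 0)
    (hG₀supp : G₀ ∈ MvPolynomial.supported ℂ
      {u : IdxR n r s | ∃ p, u = Sum.inr p ∧ p.1.1 = r - 1}) :
    G ∉ (J1 n r s Q g).radical := by
  obtain ⟨c, hc⟩ := exists_eval_indicator_ne_zero (s := wLayer n r s (r - 1)) hG₀supp hG₀ne
  set a := (wLayer n r s (r - 1)).indicator c
  have hz : ∀ u, a (Sum.inl u) = 0 := fun u =>
    Set.indicator_of_notMem (by rintro ⟨p, hp, -⟩; cases hp) c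
  have hGa : eval a G ≠ 0 := by
    rwa [hdec, map_add, map_mul, eval_indicator_wLayer_WvarR_top, zero_mul, add_zero]
  exact Ideal.notMem_radical_of_le_ker (eval a) (J1_le_ker_eval hhom hg1 hz) hGa

/-- (Lemma 3.2) Assume `r ≥ 3` and `s_r = 1`.  Let `G` be a nonzero homogeneous polynomial
in the variables `z_1, …, z_n, w^{(r−1)}_1, …, w^{(r−1)}_{s_{r−1}}, w^{(r)}_1` which can be
written `G = G₀ + w^{(r)}_1·G₁` with `G₀` a nonzero polynomial in the variables
`w^{(r−1)}_1, …, w^{(r−1)}_{s_{r−1}}` only.  If `G ∈ I = ker φ`, then `G` does not lie in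
the radical of the ideal `J₁`. -/
theorem not_mem_radical_J1_of_mem_ker
    (n r : ℕ) (hn : 1 ≤ n) (hr : 3 ≤ r)
    (s : ℕ → ℕ) (hsr : s r = 1)
    (Q : ℕ → ℕ → MvPolynomial (Fin n) ℂ)
    (hhom : ∀ k, 2 ≤ k → k ≤ r → ∀ i < s k, (Q k i).IsHomogeneous k)
    (hli : ∀ k, 2 ≤ k → k ≤ r → LinearIndependent ℂ (fun i : Fin (s k) => Q k (i : ℕ)))
    (hprol : ∀ k, 2 ≤ k → k < r → ∀ i < s (k + 1), ∀ l : Fin n,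
      pderiv l (Q (k + 1) i) ∈ Submodule.span ℂ {q | ∃ j < s k, q = Q k j})
    (g : ℕ → ℕ → ℕ → MvPolynomial (Fin n) ℂ)
    (hg1 : ∀ j, 3 ≤ j → j ≤ r → ∀ i < s j, ∀ l < s (j - 1), (g j i l).IsHomogeneous 1)
    (hEuler : ∀ j, 3 ≤ j → j ≤ r → ∀ i < s j,
      Q j i = ∑ l ∈ Finset.range (s (j - 1)), g j i l * Q (j - 1) l)
    (G G₀ G₁ : SR n r s)
    (hGne : G ≠ 0)
    (hGhom : ∃ d : ℕ, G.IsHomogeneous d)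
    (hGsupp : G ∈ MvPolynomial.supported ℂ
      {u : IdxR n r s | (∃ i : Fin n, u = Sum.inl (some i)) ∨
        (∃ p, u = Sum.inr p ∧ (p.1.1 = r - 1 ∨ (p.1.1 = r ∧ p.1.2 = 0)))})
    (hdec : G = G₀ + WvarR n r s r 0 * G₁)
    (hG₀ne : G₀ ≠ 0)
    (hG₀supp : G₀ ∈ MvPolynomial.supported ℂ
      {u : IdxR n r s | ∃ p, u = Sum.inr p ∧ p.1.1 = r - 1})
    (hGI : G ∈ RingHom.ker (phiR n r s Q)) :
    G ∉ (J1 n r s Q g).radical :=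
  not_mem_radical_J1_of_mem_ker_general n r s Q hhom g hg1 G G₀ G₁ hdec hG₀ne hG₀supp
end
end

section
/- (Lemma 3.3) Let F ∈ ℂ[x_1, …, x_n] be a nonzero homogeneous polynomial of degree m ≥ 1, and suppose that the ℂ-linear span of its partial derivatives ∂F/∂x_1, …, ∂F/∂x_n is a vector space of dimension k (necessarily k ≤ n). Then there exist k linearly independent homogeneous linear forms f_1, …, f_k ∈ ℂ[x_1, …, x_n] such that F belongs to the ℂ-subalgebra of ℂ[x_1, …, x_n] generated by f_1, …, f_k (equivalently, F is a homogeneous polynomial of degree m in f_1, …, f_k). -/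
/-!
Let `D v = ∑ vᵢ ∂F/∂xᵢ` be the derivative of `F` along `v ∈ ℂⁿ`, so that `ker D` has dimension
`n - k`. Pick a basis of `ℂⁿ` whose last `n - k` vectors span `ker D`, let `P` be the matrix with
these columns and `Q = P⁻¹`, and substitute `x = P y` (this is `bind₁ P.toMvPolynomial`). By the
chain rule `∂/∂yₜ` of the new polynomial is the substituted derivative of `F` along the `t`-th
basis vector, so in characteristic zero the new polynomial only involves the first `k` variables.
Substituting back `y = Q x` writes `F` as a polynomial in the linear forms given by the first `k`
rows of `Q`.
-/

open MvPolynomial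

namespace MvPolynomial

variable {R σ τ : Type*} [CommSemiring R]

theorem pderiv_bind₁ [Fintype σ] (g : σ → MvPolynomial τ R) (t : τ) (p : MvPolynomial σ R) :
    pderiv t (bind₁ g p) = ∑ i, bind₁ g (pderiv i p) * pderiv t (g i) := by
  classical
  induction p using MvPolynomial.induction_on with
  | C a => simp
  | add p q hp hq => simp only [map_add, hp, hq, add_mul, Finset.sum_add_distrib]
  | mul_X p j hp =>
    simp [pderiv_X, Pi.single_apply, hp, add_mul, Finset.sum_add_distrib, Finset.mul_sum,
      apply_ite (bind₁ g), mul_assoc]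

theorem pderiv_ne_zero_of_mem_vars [IsAddTorsionFree R] {i : σ} {p : MvPolynomial σ R}
    (h : i ∈ p.vars) : pderiv i p ≠ 0 := by
  classical
  obtain ⟨m, hm, hmi⟩ := (mem_vars_iff_mem_support i).1 h
  have hle : Finsupp.single i 1 ≤ m :=
    Finsupp.single_le_iff.2 (Nat.one_le_iff_ne_zero.2 (Finsupp.mem_support_iff.1 hmi))
  intro h0
  have := congrArg (coeff (m - Finsupp.single i 1)) h0
  rw [coeff_pderiv, tsub_add_cancel_of_le hle, coeff_zero, mul_comm, ← Nat.cast_succ,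
    ← nsmul_eq_mul, smul_eq_zero] at this
  exact this.elim (Nat.succ_ne_zero _) (mem_support_iff.1 hm)

theorem mem_supported_of_pderiv_eq_zero [IsAddTorsionFree R] {s : Set σ} {p : MvPolynomial σ R}
    (h : ∀ i ∉ s, pderiv i p = 0) : p ∈ supported R s :=
  mem_supported.2 fun i hi => by_contra fun his => pderiv_ne_zero_of_mem_vars hi (h i his)

end MvPolynomial

namespace Matrix

variable {R σ ι κ : Type*} [CommSemiring R]

theorem pderiv_toMvPolynomial [Fintype σ] (M : Matrix ι σ R) (t : ι) (j : σ) :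
    pderiv j (M.toMvPolynomial t) = C (M t j) := by
  classical
  simp [toMvPolynomial, ← C_mul_X_eq_monomial, pderiv_X, Pi.single_apply]

theorem bind₁_toMvPolynomial_bind₁_toMvPolynomial [Fintype ι] [Fintype κ]
    (M : Matrix σ ι R) (N : Matrix ι κ R) (p : MvPolynomial σ R) :
    bind₁ N.toMvPolynomial (bind₁ M.toMvPolynomial p) = bind₁ (M * N).toMvPolynomial p := by
  rw [bind₁_bind₁]
  simp only [← toMvPolynomial_mul]

theorem linearIndependent_toMvPolynomial [Fintype σ] [Fintype ι] [DecidableEq ι]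
    {Q : Matrix ι σ R} {P : Matrix σ ι R} (h : Q * P = 1) :
    LinearIndependent R Q.toMvPolynomial := by
  refine LinearIndependent.of_comp (bind₁ P.toMvPolynomial).toLinearMap ?_
  have : ⇑(bind₁ P.toMvPolynomial) ∘ Q.toMvPolynomial = X := by
    funext t
    simp [← toMvPolynomial_mul, h]
  exact this ▸ linearIndependent_X ι R

end Matrix

theorem MvPolynomial.mem_adjoin_toMvPolynomial_of_sum_smul_pderiv_eq_zero {R σ ι : Type*}
    [CommSemiring R] [IsAddTorsionFree R] [Fintype σ] [DecidableEq σ] [Fintype ι]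
    {P : Matrix σ ι R} {Q : Matrix ι σ R} (hPQ : P * Q = 1) {s : Set ι} {F : MvPolynomial σ R}
    (hF : ∀ t ∉ s, ∑ i, P i t • pderiv i F = 0) :
    F ∈ Algebra.adjoin R (Q.toMvPolynomial '' s) := by
  have hG : bind₁ P.toMvPolynomial F ∈ supported R s := by
    refine mem_supported_of_pderiv_eq_zero fun t ht => ?_
    simp only [pderiv_bind₁, Matrix.pderiv_toMvPolynomial, mul_comm _ (C _), C_mul', ← map_smul,
      ← map_sum, hF t ht, map_zero]
  have := Subalgebra.mem_map.2 ⟨_, hG, Matrix.bind₁_toMvPolynomial_bind₁_toMvPolynomial P Q F⟩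
  rw [supported_eq_adjoin_X, AlgHom.map_adjoin, Set.image_image, hPQ, Matrix.toMvPolynomial_one,
    bind₁_X_left, AlgHom.id_apply] at this
  simpa only [bind₁_X_right] using this

theorem LinearMap.exists_basis_sum_ker_of_finrank_range_eq {K V M : Type*} [Field K]
    [AddCommGroup V] [Module K V] [FiniteDimensional K V] [AddCommGroup M] [Module K M]
    (D : V →ₗ[K] M) {k : ℕ} (hk : Module.finrank K (range D) = k) :
    ∃ b : Module.Basis (Fin k ⊕ Fin (Module.finrank K (ker D))) K V,
      ∀ s, D (b (Sum.inr s)) = 0 := by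
  obtain ⟨W, hW⟩ := (ker D).exists_isCompl
  have hWk : Module.finrank K W = k := by
    have := D.finrank_range_add_finrank_ker
    have := Submodule.finrank_add_eq_of_isCompl hW
    omega
  refine ⟨((Module.finBasisOfFinrankEq K W hWk).prod (Module.finBasis K (ker D))).map
    (Submodule.prodEquivOfIsCompl W (ker D) hW.symm), fun s => ?_⟩
  simp [Submodule.coe_prodEquivOfIsCompl']

theorem exists_linear_forms_of_finrank_span_pderiv_general
    (n k : ℕ)
    (F : MvPolynomial (Fin n) ℂ)
    (hk : Module.finrank ℂ
      (Submodule.span ℂ (Set.range fun i : Fin n => pderiv i F)) = k) :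
    ∃ f : Fin k → MvPolynomial (Fin n) ℂ,
      LinearIndependent ℂ f ∧ (∀ i, (f i).IsHomogeneous 1) ∧
        F ∈ Algebra.adjoin ℂ (Set.range f) := by
  set D := Fintype.linearCombination ℂ fun i : Fin n => pderiv i F
  obtain ⟨b, hb⟩ :=
    D.exists_basis_sum_ker_of_finrank_range_eq (by rw [Fintype.range_linearCombination, hk])
  set e := Pi.basisFun ℂ (Fin n)
  set Q := b.toMatrix e
  refine ⟨fun s => Q.toMvPolynomial (Sum.inl s), ?_, fun s => Q.toMvPolynomial_isHomogeneous _, ?_⟩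
  · exact (Matrix.linearIndependent_toMvPolynomial (b.toMatrix_mul_toMatrix_flip e)).comp _
      Sum.inl_injective
  · rw [Set.range_comp']
    refine mem_adjoin_toMvPolynomial_of_sum_smul_pderiv_eq_zero (e.toMatrix_mul_toMatrix_flip b) ?_
    rintro (s | s) hs
    · exact absurd (Set.mem_range_self s) hs
    · simpa [D, e, Fintype.linearCombination_apply, Module.Basis.toMatrix_apply] using hb s

/-- (Lemma 3.3) Let `F ∈ ℂ[x_1, …, x_n]` be a nonzero homogeneous polynomial of degree
`m ≥ 1` and suppose the ℂ-linear span of its partial derivatives `∂F/∂x_1, …, ∂F/∂x_n`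
has dimension `k`.  Then there exist `k` linearly independent homogeneous linear forms
`f_1, …, f_k` such that `F` lies in the ℂ-subalgebra generated by `f_1, …, f_k`
(equivalently, `F` is a homogeneous polynomial of degree `m` in `f_1, …, f_k`). -/
theorem exists_linear_forms_of_finrank_span_pderiv
    (n m k : ℕ) (hm : 1 ≤ m)
    (F : MvPolynomial (Fin n) ℂ) (hF : F ≠ 0) (hhom : F.IsHomogeneous m)
    (hk : Module.finrank ℂ
      (Submodule.span ℂ (Set.range fun i : Fin n => pderiv i F)) = k) :
    ∃ f : Fin k → MvPolynomial (Fin n) ℂ,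
      LinearIndependent ℂ f ∧ (∀ i, (f i).IsHomogeneous 1) ∧
        F ∈ Algebra.adjoin ℂ (Set.range f) :=
  exists_linear_forms_of_finrank_span_pderiv_general n k F hk
end

section
/- (Lemma 4.5) For each v = (v_1, …, v_n) ∈ ℂ^n, let σ_v : S → S be the ℂ-algebra endomorphism determined by σ_v(w_0) = w_0, σ_v(w_i) = w_i + v_i·w_0 for 1 ≤ i ≤ n, and σ_v(w_{n+j}) = w_{n+j} + B_j + Q_j(v_1, …, v_n)·w_0 for 1 ≤ j ≤ c, where B_j = Q_j(w_1 + v_1, …, w_n + v_n) − Q_j(w_1, …, w_n) − Q_j(v_1, …, v_n) is the polarization of Q_j (a linear form in w_1, …, w_n). Then σ_v(f_j) = f_j for every 1 ≤ j ≤ c; in particular the ideal (f_1, …, f_c) and the subvariety Y are stable under the action of the vector group W = ℂ^n. -/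
open MvPolynomial

noncomputable section

/-- The polynomial ring `S = ℂ[w_0, w_1, …, w_{n+c}]`. -/
abbrev S2 (n c : ℕ) := MvPolynomial (Fin (n + c + 1)) ℂ

/-- The index of the variable `w_0`. -/
def wVar0 (n c : ℕ) : Fin (n + c + 1) := ⟨0, by omega⟩

/-- The index of the variable `w_i`, `1 ≤ i ≤ n`. -/
def wVarX (n c : ℕ) (i : Fin n) : Fin (n + c + 1) := ⟨(i : ℕ) + 1, by have := i.isLt; omega⟩

/-- The index of the variable `w_{n+j}`, `1 ≤ j ≤ c`. -/
def wVarQ (n c : ℕ) (j : Fin c) : Fin (n + c + 1) := ⟨n + 1 + (j : ℕ), by have := j.isLt; omega⟩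

/-- The quadric `f_j = w_0 · w_{n+j} − Q_j(w_1, …, w_n)`. -/
def fq (n c : ℕ) (Q : Fin c → MvPolynomial (Fin n) ℂ) (j : Fin c) : S2 n c :=
  X (wVar0 n c) * X (wVarQ n c j) - rename (wVarX n c) (Q j)

/-- The ℂ-algebra homomorphism `φ : S → ℂ[t, x_1, …, x_n]` sending
`w_0 ↦ t²`, `w_i ↦ t·x_i` and `w_{n+j} ↦ Q_j(x_1, …, x_n)`; here the variable
`none` plays the role of `t` and `some i` the role of `x_i`. -/
def phi2 (n c : ℕ) (Q : Fin c → MvPolynomial (Fin n) ℂ) :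
    S2 n c →ₐ[ℂ] MvPolynomial (Option (Fin n)) ℂ :=
  aeval (fun v : Fin (n + c + 1) =>
    if h0 : (v : ℕ) = 0 then X none ^ 2
    else if h : (v : ℕ) ≤ n then X none * X (some ⟨(v : ℕ) - 1, by omega⟩)
    else rename some (Q ⟨(v : ℕ) - (n + 1), by have := v.isLt; omega⟩))

/-- The ℂ-algebra endomorphism `σ_v` of `S` determined by `w_0 ↦ w_0`,
`w_i ↦ w_i + v_i·w_0` (`1 ≤ i ≤ n`) and
`w_{n+j} ↦ w_{n+j} + B_j + Q_j(v)·w_0` (`1 ≤ j ≤ c`), where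
`B_j = Q_j(w_1 + v_1, …, w_n + v_n) − Q_j(w_1, …, w_n) − Q_j(v)` is the polarization
of `Q_j`. -/
def sigmaV (n c : ℕ) (Q : Fin c → MvPolynomial (Fin n) ℂ) (v : Fin n → ℂ) :
    S2 n c →ₐ[ℂ] S2 n c :=
  aeval (fun u : Fin (n + c + 1) =>
    if h0 : (u : ℕ) = 0 then X (wVar0 n c)
    else if h : (u : ℕ) ≤ n then
      X u + C (v ⟨(u : ℕ) - 1, by omega⟩) * X (wVar0 n c)
    else
      letI j : Fin c := ⟨(u : ℕ) - (n + 1), by have := u.isLt; omega⟩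
      X u
        + (aeval (fun i : Fin n => X (wVarX n c i) + C (v i)) (Q j)
            - rename (wVarX n c) (Q j) - C (eval v (Q j)))
        + C (eval v (Q j)) * X (wVar0 n c))

/-! Substituting `w + v·w₀` for the `x`-variables of a quadratic form `Q` gives
`Q(w) + w₀·B + w₀²·Q(v)` with `B` the polarization; the shift of `w_{n+j}` under `σ_v` is
chosen so that `w₀·σ_v(w_{n+j})` produces exactly the same two correction terms, which cancel
in `f_j = w₀·w_{n+j} − Q_j(w)`. -/

open scoped Pointwise

lemma homogeneousSubmodule_two_eq_span_X_mul_X (σ R : Type*) [CommSemiring R] :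
    homogeneousSubmodule σ R 2 =
      Submodule.span R (Set.range (X : σ → MvPolynomial σ R) * Set.range X) := by
  rw [← homogeneousSubmodule_one_pow, homogeneousSubmodule_one_eq_span_X, sq,
    Submodule.span_mul_span]

lemma aeval_add_mul_of_isHomogeneous_two {σ R A : Type*} [CommRing R] [CommRing A] [Algebra R A]
    {P : MvPolynomial σ R} (hP : P.IsHomogeneous 2) (x a : σ → A) (t : A) :
    aeval (fun i => x i + a i * t) P =
      aeval x P + t * (aeval (fun i => x i + a i) P - aeval x P - aeval a P)
        + t ^ 2 * aeval a P := by
  rw [← mem_homogeneousSubmodule, homogeneousSubmodule_two_eq_span_X_mul_X] at hP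
  induction hP using Submodule.span_induction with
  | mem p hp =>
    obtain ⟨_, ⟨i, rfl⟩, _, ⟨k, rfl⟩, rfl⟩ := hp
    simp only [map_mul, aeval_X]
    ring
  | zero => simp
  | add p q _ _ hp hq =>
    simp only [map_add, hp, hq]
    ring
  | smul r p _ hp =>
    rw [map_smul, map_smul, map_smul, map_smul, hp]
    simp only [Algebra.smul_def]
    ring

lemma aeval_C_eq_C_eval {σ τ R : Type*} [CommSemiring R] (v : σ → R) (P : MvPolynomial σ R) :
    aeval (fun i => (C (v i) : MvPolynomial τ R)) P = C (eval v P) := by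
  simpa using (comp_aeval_apply v (Algebra.ofId R (MvPolynomial τ R)) P).symm

section sigmaV

variable {n c : ℕ} {Q : Fin c → MvPolynomial (Fin n) ℂ} {v : Fin n → ℂ}

lemma sigmaV_X_wVar0 : sigmaV n c Q v (X (wVar0 n c)) = X (wVar0 n c) := by
  simp [sigmaV, wVar0]

lemma sigmaV_X_wVarX (i : Fin n) :
    sigmaV n c Q v (X (wVarX n c i)) = X (wVarX n c i) + C (v i) * X (wVar0 n c) := by
  simp [sigmaV, wVarX]

lemma sigmaV_X_wVarQ (j : Fin c) :
    sigmaV n c Q v (X (wVarQ n c j)) =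
      X (wVarQ n c j)
        + (aeval (fun i => X (wVarX n c i) + C (v i)) (Q j)
            - rename (wVarX n c) (Q j) - C (eval v (Q j)))
        + C (eval v (Q j)) * X (wVar0 n c) := by
  simp [sigmaV, wVarQ, show ¬n + 1 + (j : ℕ) ≤ n by omega]

lemma sigmaV_rename_wVarX (P : MvPolynomial (Fin n) ℂ) :
    sigmaV n c Q v (rename (wVarX n c) P) =
      aeval (fun i => X (wVarX n c i) + C (v i) * X (wVar0 n c)) P := by
  simp only [rename_eq_aeval, comp_aeval_apply, Function.comp_apply, sigmaV_X_wVarX]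

lemma sigmaV_fq (hQ : ∀ j, (Q j).IsHomogeneous 2) (j : Fin c) :
    sigmaV n c Q v (fq n c Q j) = fq n c Q j := by
  have hshift := aeval_add_mul_of_isHomogeneous_two (hQ j) (X ∘ wVarX n c)
    (fun i => C (v i)) (X (wVar0 n c))
  rw [← rename_eq_aeval, aeval_C_eq_C_eval] at hshift
  simp only [Function.comp_apply] at hshift
  rw [fq, map_sub, map_mul, sigmaV_X_wVar0, sigmaV_X_wVarQ, sigmaV_rename_wVarX, hshift]
  ring

end sigmaV

theorem sigmaV_fixes_fq_general
    (n c : ℕ)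
    (Q : Fin c → MvPolynomial (Fin n) ℂ)
    (hhom : ∀ j, (Q j).IsHomogeneous 2)
    (v : Fin n → ℂ) :
    (∀ j : Fin c, sigmaV n c Q v (fq n c Q j) = fq n c Q j) ∧
      Ideal.map (sigmaV n c Q v) (Ideal.span (Set.range (fq n c Q)))
        = Ideal.span (Set.range (fq n c Q)) := by
  have hfix : ⇑(sigmaV n c Q v) ∘ fq n c Q = fq n c Q := funext (sigmaV_fq hhom)
  refine ⟨sigmaV_fq hhom, ?_⟩
  rw [Ideal.map_span, ← Set.range_comp, hfix]

/-- (Lemma 4.5) For every `v ∈ ℂ^n` the endomorphism `σ_v` fixes each quadric `f_j`;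
in particular the ideal `(f_1, …, f_c)` (hence the subvariety `Y`) is stable under the
action of the vector group `W = ℂ^n`. -/
theorem sigmaV_fixes_fq
    (n c : ℕ) (hn : 1 ≤ n) (hc : 1 ≤ c)
    (Q : Fin c → MvPolynomial (Fin n) ℂ)
    (hhom : ∀ j, (Q j).IsHomogeneous 2)
    (hli : LinearIndependent ℂ Q)
    (v : Fin n → ℂ) :
    (∀ j : Fin c, sigmaV n c Q v (fq n c Q j) = fq n c Q j) ∧
      Ideal.map (sigmaV n c Q v) (Ideal.span (Set.range (fq n c Q)))
        = Ideal.span (Set.range (fq n c Q)) :=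
  sigmaV_fixes_fq_general n c Q hhom v
end
end

section
/- (Proposition 4.7(2): L_x(M(F)) = L_x(Y) at x = [1:0:⋯:0]) Let v = (v_0, v_1, …, v_{n+c}) ∈ ℂ^{n+c+1} satisfy v_{n+j} = 0 and Q_j(v_1, …, v_n) = 0 for all 1 ≤ j ≤ c. Then every polynomial g ∈ I = ker φ vanishes at the point p·e_0 + q·v for all p, q ∈ ℂ, where e_0 = (1, 0, …, 0); i.e., every line through [1:0:⋯:0] contained in Y is contained in M(F). -/
/-!
Let `y` be a point with `y_{n+j} = 0` and `Q_j(y_1, …, y_n) = 0` for all `j`. If `y_0 = t² ≠ 0`,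
then `y = (t², t·x, Q(x))` with `x = (y_1, …, y_n) / t`, because `Q_j(x) = t⁻² Q_j(y_1, …, y_n) = 0`
by homogeneity; so `y` lies in the image of `φ` and every `g ∈ ker φ` vanishes at `y`. Points
with `y_0 = 0` are limits of such points, and every point `p·e_0 + q·v` of the line is of this form.
-/

open MvPolynomial

noncomputable section

namespace MvPolynomial

theorem IsHomogeneous.eval_smul {σ R : Type*} [CommSemiring R] {p : MvPolynomial σ R} {d : ℕ}
    (hp : p.IsHomogeneous d) (r : R) (x : σ → R) : eval (r • x) p = r ^ d * eval x p := by
  rw [eval_eq, eval_eq, Finset.mul_sum]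
  refine Finset.sum_congr rfl fun e he => ?_
  have hd : e.degree = d := by
    rw [Finsupp.degree_eq_weight_one]
    exact hp (mem_support_iff.mp he)
  simp only [Pi.smul_apply, smul_eq_mul, mul_pow, Finset.prod_mul_distrib,
    Finset.prod_pow_eq_pow_sum, ← Finsupp.degree_apply, hd]
  ring

end MvPolynomial

section EulerSymmetric

variable {n c : ℕ} {Q : Fin c → MvPolynomial (Fin n) ℂ}

theorem wVar_cases (u : Fin (n + c + 1)) :
    u = wVar0 n c ∨ (∃ i, u = wVarX n c i) ∨ ∃ j, u = wVarQ n c j := by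
  obtain ⟨u, hu⟩ := u
  rcases Nat.eq_zero_or_pos u with rfl | hpos
  · exact Or.inl rfl
  by_cases hn : u ≤ n
  · exact Or.inr (Or.inl ⟨⟨u - 1, by omega⟩, Fin.ext (by simp [wVarX]; omega)⟩)
  · exact Or.inr (Or.inr ⟨⟨u - (n + 1), by omega⟩, Fin.ext (by simp [wVarQ]; omega)⟩)

theorem wVarX_ne_wVar0 (i : Fin n) : wVarX n c i ≠ wVar0 n c := by
  simp [wVarX, wVar0, Fin.ext_iff]

theorem wVarQ_ne_wVar0 (j : Fin c) : wVarQ n c j ≠ wVar0 n c := by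
  simp [wVarQ, wVar0, Fin.ext_iff]

theorem phi2_X_wVar0 : phi2 n c Q (X (wVar0 n c)) = X none ^ 2 := by
  simp [phi2, wVar0]

theorem phi2_X_wVarX (i : Fin n) : phi2 n c Q (X (wVarX n c i)) = X none * X (some i) := by
  simp [phi2, wVarX]

theorem phi2_X_wVarQ (j : Fin c) : phi2 n c Q (X (wVarQ n c j)) = rename some (Q j) := by
  simp [phi2, wVarQ, show ¬ n + 1 + (j : ℕ) ≤ n by omega]

theorem eval_eq_zero_of_mem_ker_phi2_of_ne_zero (hhom : ∀ j, (Q j).IsHomogeneous 2)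
    {g : S2 n c} (hg : g ∈ RingHom.ker (phi2 n c Q)) {y : Fin (n + c + 1) → ℂ}
    (hyQ : ∀ j, y (wVarQ n c j) = 0) (hyX : ∀ j, eval (y ∘ wVarX n c) (Q j) = 0)
    (hy0 : y (wVar0 n c) ≠ 0) : eval y g = 0 := by
  obtain ⟨t, ht⟩ := IsAlgClosed.exists_pow_nat_eq (y (wVar0 n c)) two_pos
  have ht0 : t ≠ 0 := by rintro rfl; simp [← ht] at hy0
  -- `(t, y_X / t)` is a preimage of `y` under the parametrization `(t, x) ↦ (t², t x, Q(x))`.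
  set w : Option (Fin n) → ℂ := fun o => o.elim t fun i => t⁻¹ * y (wVarX n c i)
  have hcomp : (aeval w).comp (phi2 n c Q) = aeval y := by
    refine algHom_ext fun u => ?_
    rcases wVar_cases u with rfl | ⟨i, rfl⟩ | ⟨j, rfl⟩
    · simp [phi2_X_wVar0, w, ht]
    · simp [phi2_X_wVarX, w]; field_simp
    · have hw : w ∘ some = t⁻¹ • (y ∘ wVarX n c) := rfl
      simp [phi2_X_wVarQ, eval_rename, hw, (hhom j).eval_smul, hyX, hyQ]
  calc eval y g = aeval w (phi2 n c Q g) := (DFunLike.congr_fun hcomp g).symm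
    _ = 0 := by rw [RingHom.mem_ker.mp hg, map_zero]

theorem eval_eq_zero_of_mem_ker_phi2 (hhom : ∀ j, (Q j).IsHomogeneous 2)
    {g : S2 n c} (hg : g ∈ RingHom.ker (phi2 n c Q)) {y : Fin (n + c + 1) → ℂ}
    (hyQ : ∀ j, y (wVarQ n c j) = 0) (hyX : ∀ j, eval (y ∘ wVarX n c) (Q j) = 0) :
    eval y g = 0 := by
  set y' : ℂ → Fin (n + c + 1) → ℂ := Function.update y (wVar0 n c)
  have hy'X (a : ℂ) : y' a ∘ wVarX n c = y ∘ wVarX n c :=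
    funext fun i => Function.update_of_ne (wVarX_ne_wVar0 i) _ _
  have hvanish : Set.EqOn (fun a => eval (y' a) g) (fun _ => 0) {0}ᶜ := fun a ha =>
    eval_eq_zero_of_mem_ker_phi2_of_ne_zero hhom hg
      (fun j => by simp only [y', Function.update_of_ne (wVarQ_ne_wVar0 j), hyQ])
      (by simpa only [hy'X] using hyX) (by simpa [y'] using ha)
  have hzero := Continuous.ext_on (dense_compl_singleton 0)
    ((continuous_eval g).comp (continuous_const.update _ continuous_id)) continuous_const hvanish
  simpa [y'] using congrFun hzero (y (wVar0 n c))

end EulerSymmetric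

theorem line_in_Y_contained_in_MF_general
    (n c : ℕ)
    (Q : Fin c → MvPolynomial (Fin n) ℂ)
    (hhom : ∀ j, (Q j).IsHomogeneous 2)
    (v : Fin (n + c + 1) → ℂ)
    (hvw : ∀ j : Fin c, v (wVarQ n c j) = 0)
    (hvQ : ∀ j : Fin c, eval (fun i : Fin n => v (wVarX n c i)) (Q j) = 0) :
    ∀ g ∈ RingHom.ker (phi2 n c Q), ∀ p q : ℂ,
      eval (fun u : Fin (n + c + 1) => p * (if (u : ℕ) = 0 then 1 else 0) + q * v u) g = 0 := by
  intro g hg p q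
  refine eval_eq_zero_of_mem_ker_phi2 hhom hg (fun j => ?_) (fun j => ?_)
  · simp only [hvw j, mul_zero, add_zero]
    simp [wVarQ]
  · have hX : (fun u : Fin (n + c + 1) => p * (if (u : ℕ) = 0 then 1 else 0) + q * v u) ∘
        wVarX n c = q • fun i => v (wVarX n c i) := by
      ext i; simp [wVarX]
    rw [hX, (hhom j).eval_smul, hvQ, mul_zero]

/-- (Proposition 4.7(2): `L_x(M(F)) = L_x(Y)` at `x = [1:0:⋯:0]`) If
`v ∈ ℂ^{n+c+1}` satisfies `v_{n+j} = 0` and `Q_j(v_1, …, v_n) = 0` for all `j`,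
then every polynomial `g ∈ I = ker φ` vanishes at `p·e_0 + q·v` for all `p, q ∈ ℂ`;
i.e. every line through `[1:0:⋯:0]` contained in `Y` is contained in `M(F)`. -/
theorem line_in_Y_contained_in_MF
    (n c : ℕ) (hn : 1 ≤ n) (hc : 1 ≤ c)
    (Q : Fin c → MvPolynomial (Fin n) ℂ)
    (hhom : ∀ j, (Q j).IsHomogeneous 2)
    (hli : LinearIndependent ℂ Q)
    (v : Fin (n + c + 1) → ℂ)
    (hvw : ∀ j : Fin c, v (wVarQ n c j) = 0)
    (hvQ : ∀ j : Fin c, eval (fun i : Fin n => v (wVarX n c i)) (Q j) = 0) :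
    ∀ g ∈ RingHom.ker (phi2 n c Q), ∀ p q : ℂ,
      eval (fun u : Fin (n + c + 1) => p * (if (u : ℕ) = 0 then 1 else 0) + q * v u) g = 0 :=
  line_in_Y_contained_in_MF_general n c Q hhom v hvw hvQ
end
end
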